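/- arXiv:1902.10004 — 4 statements merged into one kernel-verified Lean document; each statement's English description precedes it below -/
import Mathlib

section
/- If D is a strongly connected digraph of order n whose strong vertex-monochromatic connection number equals n, then the diameter of D is at most 2. -/
namespace SVMC

variable {V : Type*}

/-- `IsWalk A u v l` : `u :: l` is a directed walk from `u` to `v` in the digraph
with arc relation `A`; its length (number of arcs) is `l.length`. -/
def IsWalk (A : V → V → Prop) (u v : V) (l : List V) : Prop :=
  List.Chain A u l ∧ (u :: l).getLast (List.cons_ne_nil u l) = v

/-- A directed path: a walk with no repeated vertices. -/
def IsPath (A : V → V → Prop) (u v : V) (l : List V) : Prop :=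
  IsWalk A u v l ∧ (u :: l).Nodup

def Reachable (A : V → V → Prop) (u v : V) : Prop := ∃ l, IsWalk A u v l

/-- A digraph is strong if every vertex is reachable from every other vertex. -/
def Strong (A : V → V → Prop) : Prop := ∀ u v : V, Reachable A u v

/-- Directed distance: the minimum length of a directed walk from `u` to `v`. -/
noncomputable def dist (A : V → V → Prop) (u v : V) : ℕ :=
  sInf {n | ∃ l, IsWalk A u v l ∧ l.length = n}

/-- Diameter: maximum directed distance over ordered pairs of vertices. -/
noncomputable def diam (A : V → V → Prop) : ℕ :=
  sSup {d | ∃ u v : V, dist A u v = d}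

/-- The internal vertices of the walk `u :: l` (ending at the last entry of `l`)
are `l.dropLast`.  `MonoInternal Γ l` says they all receive one color. -/
def MonoInternal (Γ : V → ℕ) (l : List V) : Prop :=
  ∃ c, ∀ x ∈ l.dropLast, Γ x = c

/-- A strong vertex-monochromatic connection coloring. -/
def IsSVMC (A : V → V → Prop) (Γ : V → ℕ) : Prop :=
  ∀ u v : V, ∃ l, IsPath A u v l ∧ MonoInternal Γ l

/-- The number of colors used by a vertex coloring. -/
noncomputable def colorCount (Γ : V → ℕ) : ℕ := (Set.range Γ).ncard

/-- The strong vertex-monochromatic connection number. -/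
noncomputable def smcv (A : V → V → Prop) : ℕ :=
  sSup {k | ∃ Γ : V → ℕ, IsSVMC A Γ ∧ colorCount Γ = k}

def TotalAbsorbing (A : V → V → Prop) (S : Set V) : Prop := ∀ v : V, ∃ w ∈ S, A v w

def TotalDominating (A : V → V → Prop) (S : Set V) : Prop := ∀ v : V, ∃ w ∈ S, A w v

def Absorbing (A : V → V → Prop) (S : Set V) : Prop := ∀ v ∉ S, ∃ w ∈ S, A v w

def Dominating (A : V → V → Prop) (S : Set V) : Prop := ∀ v ∉ S, ∃ w ∈ S, A w v

/-- A walk all of whose vertices lie in `S`. -/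
def IsWalkIn (A : V → V → Prop) (S : Set V) (u v : V) (l : List V) : Prop :=
  IsWalk A u v l ∧ ∀ x ∈ u :: l, x ∈ S

/-- The subdigraph induced by `S` is strongly connected. -/
def StrongOn (A : V → V → Prop) (S : Set V) : Prop :=
  ∀ u ∈ S, ∀ v ∈ S, ∃ l, IsWalkIn A S u v l

/-- `Ω_v(D)`: minimum order of a strong, absorbing and dominating subdigraph. -/
noncomputable def Omegav (A : V → V → Prop) : ℕ :=
  sInf {k | ∃ S : Set V, S.Nonempty ∧ StrongOn A S ∧ Absorbing A S ∧
    Dominating A S ∧ S.ncard = k}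

/-- A directed cycle through `u` with vertex list `u :: l` (length `l.length`). -/
def IsCycle (A : V → V → Prop) (u : V) (l : List V) : Prop :=
  l ≠ [] ∧ IsWalk A u u l ∧ (u :: l.dropLast).Nodup

/-- The girth: minimum length of a directed cycle. -/
noncomputable def girth (A : V → V → Prop) : ℕ :=
  sInf {n | ∃ u l, IsCycle A u l ∧ l.length = n}

/-- The arcs of the walk `u :: l` are the consecutive pairs, i.e. `(u :: l).zip l`.
`MonoArcs` says they all get one color under the arc coloring `ΓA`. -/
def MonoArcs (ΓA : V → V → ℕ) (u : V) (l : List V) : Prop :=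
  ∃ c, ∀ p ∈ (u :: l).zip l, ΓA p.1 p.2 = c

/-- A strong monochromatic connection (arc) coloring. -/
def IsSMC (A : V → V → Prop) (ΓA : V → V → ℕ) : Prop :=
  ∀ u v : V, ∃ l, IsPath A u v l ∧ MonoArcs ΓA u l

/-- The number of colors used on the arcs. -/
noncomputable def arcColorCount (A : V → V → Prop) (ΓA : V → V → ℕ) : ℕ :=
  ((fun p : V × V => ΓA p.1 p.2) '' {p : V × V | A p.1 p.2}).ncard

/-- The strong monochromatic connection number (arc version). -/
noncomputable def smc (A : V → V → Prop) : ℕ :=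
  sSup {k | ∃ ΓA : V → V → ℕ, IsSMC A ΓA ∧ arcColorCount A ΓA = k}

/-- The number of arcs of a digraph. -/
noncomputable def arcCount (A : V → V → Prop) : ℕ := {p : V × V | A p.1 p.2}.ncard

/-- `Ω(D)`: minimum number of arcs of a strong spanning subdigraph. -/
noncomputable def Omega (A : V → V → Prop) : ℕ :=
  sInf {k | ∃ B : V → V → Prop, (∀ u v, B u v → A u v) ∧ Strong B ∧ arcCount B = k}

/-- The arcs of `A`, as the vertex type of the line digraph. -/
def Arc (A : V → V → Prop) : Type _ := {p : V × V // A p.1 p.2}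

/-- Adjacency in the line digraph: head of `e` equals tail of `f`. -/
def lineAdj (A : V → V → Prop) : Arc A → Arc A → Prop :=
  fun e f => e.1.2 = f.1.1

/-- `(u,v)` is a bad pair: `N⁺(u) = {v}` and `N⁻(v) = {u}`. -/
def BadPair (A : V → V → Prop) (u v : V) : Prop :=
  {w | A u w} = {v} ∧ {w | A w v} = {u}

/-- A tournament: an orientation of a complete graph. -/
def IsTournament (A : V → V → Prop) : Prop :=
  (∀ v, ¬ A v v) ∧ ∀ u v : V, u ≠ v → (A u v ↔ ¬ A v u)

/-- The directed 3-cycle on `Fin 3`. -/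
def C3Adj : Fin 3 → Fin 3 → Prop := fun i j => j = i + 1

/-- `A` is isomorphic to the directed 3-cycle. -/
def IsoC3 (A : V → V → Prop) : Prop :=
  ∃ e : V ≃ Fin 3, ∀ u v : V, A u v ↔ C3Adj (e u) (e v)

end SVMC

/-! An SVMC-coloring with as many colors as vertices is injective, so a monochromatic set of
internal vertices has at most one element: every ordered pair is joined by a path of length
at most 2. -/

namespace SVMC

variable {V : Type*}

/-- `sSup` of an empty or unbounded set of naturals is `0`. -/
theorem sSup_mem_of_pos {s : Set ℕ} (h : 0 < sSup s) : sSup s ∈ s := by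
  by_cases hbdd : BddAbove s
  · rcases s.eq_empty_or_nonempty with rfl | hne
    · simp at h
    · exact Nat.sSup_mem hne hbdd
  · simp [Nat.sSup_of_not_bddAbove hbdd] at h

theorem exists_isSVMC_colorCount_eq_smcv {A : V → V → Prop} (h : 0 < smcv A) :
    ∃ Γ, IsSVMC A Γ ∧ colorCount Γ = smcv A :=
  sSup_mem_of_pos h

theorem injective_of_colorCount_eq_card [Finite V] {Γ : V → ℕ}
    (h : colorCount Γ = Nat.card V) : Function.Injective Γ := by
  have himage : (Γ '' Set.univ).ncard = (Set.univ : Set V).ncard := by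
    rwa [Set.image_univ, Set.ncard_univ]
  exact Set.injOn_univ.mp (Set.injOn_of_ncard_image_eq himage)

theorem length_le_two_of_monoInternal {Γ : V → ℕ} (hΓ : Function.Injective Γ) {l : List V}
    (hl : l.Nodup) (hmono : MonoInternal Γ l) : l.length ≤ 2 := by
  obtain ⟨c, hc⟩ := hmono
  have hconst : l.dropLast.map Γ = List.replicate l.dropLast.length c :=
    List.eq_replicate_iff.mpr ⟨List.length_map _, List.forall_mem_map.mpr hc⟩
  have hnodup : (List.replicate l.dropLast.length c).Nodup :=
    hconst ▸ (hl.sublist (List.dropLast_sublist l)).map hΓ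
  have := List.nodup_replicate.mp hnodup
  simp only [List.length_dropLast] at this
  omega

theorem dist_le_length {A : V → V → Prop} {u v : V} {l : List V} (hl : IsWalk A u v l) :
    dist A u v ≤ l.length :=
  Nat.sInf_le ⟨l, hl, rfl⟩

theorem IsSVMC.dist_le_two {A : V → V → Prop} {Γ : V → ℕ} (hsvmc : IsSVMC A Γ)
    (hΓ : Function.Injective Γ) (u v : V) : dist A u v ≤ 2 := by
  obtain ⟨l, ⟨hwalk, hnodup⟩, hmono⟩ := hsvmc u v
  exact (dist_le_length hwalk).trans (length_le_two_of_monoInternal hΓ hnodup.of_cons hmono)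

theorem diam_le {A : V → V → Prop} {k : ℕ} (h : ∀ u v, dist A u v ≤ k) : diam A ≤ k :=
  csSup_le' <| by rintro _ ⟨u, v, rfl⟩; exact h u v

end SVMC

theorem diam_le_two_of_smcv_eq_card_general {V : Type*} [Fintype V] (A : V → V → Prop)
    (h : SVMC.smcv A = Fintype.card V) :
    SVMC.diam A ≤ 2 := by
  refine SVMC.diam_le fun u v => ?_
  have hpos : 0 < SVMC.smcv A := h ▸ Fintype.card_pos_iff.mpr ⟨u⟩
  obtain ⟨Γ, hsvmc, hcount⟩ := SVMC.exists_isSVMC_colorCount_eq_smcv hpos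
  have hinj : Function.Injective Γ :=
    SVMC.injective_of_colorCount_eq_card (by rw [hcount, h, Nat.card_eq_fintype_card])
  exact hsvmc.dist_le_two hinj u v

/-- if a strong digraph of order `n` has `smc_v(D) = n`, then its
diameter is at most 2. -/
theorem diam_le_two_of_smcv_eq_card {V : Type*} [Fintype V] (A : V → V → Prop)
    (hstrong : SVMC.Strong A) (h : SVMC.smcv A = Fintype.card V) :
    SVMC.diam A ≤ 2 :=
  diam_le_two_of_smcv_eq_card_general A h
end

section
/- Let D be a strong digraph with an SVMC-coloring Γ, and suppose that for every vertex v of D there exists a vertex x with directed distance d(x,v) ≥ 3. Then the set of vertices whose color class is non-singular is a total dominating set of D, i.e., every vertex of D has an in-neighbor lying in a non-singular color class. -/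
/- The SVMC path from a vertex `x` with `d(x, v) ≥ 3` to `v` has at least two internal vertices;
the last two of them are distinct and share a color, and the last one is an in-neighbour of `v`. -/

theorem List.exists_eq_append_triple {α : Type*} {l : List α} (h : 3 ≤ l.length) :
    ∃ r a b c, l = r ++ [a, b, c] := by
  rcases hrev : l.reverse with _ | ⟨c, _ | ⟨b, _ | ⟨a, r⟩⟩⟩
  case cons.cons.cons => exact ⟨r.reverse, a, b, c, by simpa using congrArg List.reverse hrev⟩
  all_goals
    have := l.length_reverse
    simp only [hrev, List.length_cons, List.length_nil] at this
    omega

theorem Set.two_le_ncard_setOf_eq_of_ne {α β : Type*} [Finite α] {f : α → β} {a b : α}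
    (hab : a ≠ b) (hf : f a = f b) : 2 ≤ {x | f x = f b}.ncard :=
  calc 2 = ({a, b} : Set α).ncard := (Set.ncard_pair hab).symm
    _ ≤ _ := Set.ncard_le_ncard (by simp [Set.insert_subset_iff, hf])

namespace SVMC

variable {V : Type*} {A : V → V → Prop}

theorem IsWalk.dist_le {u v : V} {l : List V} (h : IsWalk A u v l) : dist A u v ≤ l.length :=
  Nat.sInf_le ⟨l, h, rfl⟩

theorem IsPath.exists_internal_ne_adj {u v : V} {l : List V} (h : IsPath A u v l)
    (hl : 3 ≤ l.length) : ∃ a b, a ≠ b ∧ a ∈ l.dropLast ∧ b ∈ l.dropLast ∧ A b v := by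
  obtain ⟨⟨hchain, hlast⟩, hnodup⟩ := h
  obtain ⟨r, a, b, c, rfl⟩ := List.exists_eq_append_triple hl
  have hcv : c = v := by simpa using hlast
  have hdrop : (r ++ [a, b, c]).dropLast = r ++ [a, b] := by
    simp [List.dropLast_append_of_ne_nil]
  have hab : a ≠ b := by
    rintro rfl
    simp [List.nodup_append, List.nodup_cons] at hnodup
  have hbc : A b c := by
    have hchain : List.IsChain A (u :: (r ++ [a, b, c])) := hchain
    simp only [List.isChain_cons_append_cons_cons, List.isChain_pair] at hchain
    exact hchain.2.2
  exact ⟨a, b, hab, by simp [hdrop], by simp [hdrop], hcv ▸ hbc⟩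

end SVMC

theorem totalDominating_of_svmc_general {V : Type*} [Fintype V] (A : V → V → Prop)
    (Γ : V → ℕ) (hΓ : SVMC.IsSVMC A Γ)
    (hd : ∀ v : V, ∃ x : V, 3 ≤ SVMC.dist A x v) :
    SVMC.TotalDominating A {w : V | 2 ≤ {x : V | Γ x = Γ w}.ncard} := by
  intro v
  obtain ⟨x, hx⟩ := hd v
  obtain ⟨l, hpath, c, hmono⟩ := hΓ x v
  obtain ⟨a, b, hab, ha, hb, hbv⟩ :=
    hpath.exists_internal_ne_adj (hx.trans hpath.1.dist_le)
  exact ⟨b, Set.two_le_ncard_setOf_eq_of_ne hab ((hmono a ha).trans (hmono b hb).symm), hbv⟩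

/-- if every vertex `v` of a strong digraph has some vertex `x`
with `d(x,v) ≥ 3`, then for an SVMC-coloring the vertices in non-singular
color classes form a total dominating set. -/
theorem totalDominating_of_svmc {V : Type*} [Fintype V] (A : V → V → Prop)
    (Γ : V → ℕ) (hstrong : SVMC.Strong A) (hΓ : SVMC.IsSVMC A Γ)
    (hd : ∀ v : V, ∃ x : V, 3 ≤ SVMC.dist A x v) :
    SVMC.TotalDominating A {w : V | 2 ≤ {x : V | Γ x = Γ w}.ncard} :=
  totalDominating_of_svmc_general A Γ hΓ hd
end

section
/- Let D be a strong digraph of girth at least 5 with an SVMC-coloring Γ, and let D* be the subdigraph induced by the vertices lying in non-singular color classes. Then D* is strongly connected, and V(D*) is both an absorbing set and a dominating set of D. -/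
namespace SVMC

variable {V : Type*} {A : V → V → Prop} {u v : V} {l : List V}

theorem isWalk_iff_isChain :
    IsWalk A u v l ↔ (u :: l).IsChain A ∧ (u :: l).getLast (List.cons_ne_nil u l) = v :=
  Iff.rfl

theorem isWalk_nil_iff : IsWalk A u v [] ↔ u = v := by
  simp [isWalk_iff_isChain]

theorem isWalk_cons_iff {a : V} : IsWalk A u v (a :: l) ↔ A u a ∧ IsWalk A a v l := by
  simp only [isWalk_iff_isChain, List.isChain_cons_cons, List.getLast_cons_cons]
  tauto

theorem IsWalk.append {w : V} {m : List V} (hl : IsWalk A u v l) (hm : IsWalk A v w m) :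
    IsWalk A u w (l ++ m) := by
  induction l generalizing u with
  | nil => rwa [isWalk_nil_iff.1 hl]
  | cons a t ih =>
    obtain ⟨hua, hat⟩ := isWalk_cons_iff.1 hl
    exact isWalk_cons_iff.2 ⟨hua, ih hat⟩

theorem IsWalk.adj_getLast_dropLast (hw : IsWalk A u v l) (hl : l ≠ []) :
    A ((u :: l.dropLast).getLast (List.cons_ne_nil _ _)) v := by
  induction l generalizing u with
  | nil => exact absurd rfl hl
  | cons a t ih =>
    obtain ⟨hua, hat⟩ := isWalk_cons_iff.1 hw
    rcases eq_or_ne t [] with rfl | ht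
    · simpa [← isWalk_nil_iff.1 hat] using hua
    · simpa [List.dropLast_cons_of_ne_nil ht] using ih hat ht

theorem IsPath.isCycle_append_singleton (hp : IsPath A u v l) (h : A v u) :
    IsCycle A u (l ++ [u]) :=
  ⟨by simp, hp.1.append (isWalk_cons_iff.2 ⟨h, isWalk_nil_iff.2 rfl⟩),
    by rw [List.dropLast_concat]; exact hp.2⟩

theorem girth_le_length (hc : IsCycle A u l) : girth A ≤ l.length :=
  Nat.sInf_le ⟨u, l, hc, rfl⟩

theorem IsPath.girth_le_length_add_one (hp : IsPath A u v l) (h : A v u) :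
    girth A ≤ l.length + 1 := by
  simpa using girth_le_length (hp.isCycle_append_singleton h)

theorem nontrivial_of_two_le_girth (hg : 2 ≤ girth A) : Nontrivial V := by
  have hne : {n | ∃ u l, IsCycle A u l ∧ l.length = n}.Nonempty := by
    by_contra h
    rw [Set.not_nonempty_iff_eq_empty] at h
    rw [girth, h, Nat.sInf_empty] at hg
    omega
  obtain ⟨u, l, hc, hlen⟩ := Nat.sInf_mem hne
  have hl : l.dropLast ≠ [] := by
    rw [← List.length_pos_iff, List.length_dropLast]
    rw [← girth] at hlen
    omega
  obtain ⟨a, ha⟩ := List.exists_mem_of_ne_nil _ hl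
  exact ⟨u, a, fun hua => (List.nodup_cons.1 hc.2.2).1 (hua ▸ ha)⟩

theorem Strong.exists_adj_from [Nontrivial V] (h : Strong A) (u : V) : ∃ v, A u v := by
  obtain ⟨t, ht⟩ := exists_ne u
  obtain ⟨_ | ⟨v, l⟩, hw⟩ := h u t
  · exact absurd (isWalk_nil_iff.1 hw) ht.symm
  · exact ⟨v, (isWalk_cons_iff.1 hw).1⟩

theorem Strong.exists_adj_to [Nontrivial V] (h : Strong A) (v : V) : ∃ u, A u v := by
  obtain ⟨t, ht⟩ := exists_ne v
  obtain ⟨l, hw⟩ := h t v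
  have hl : l ≠ [] := by
    rintro rfl
    exact ht (isWalk_nil_iff.1 hw)
  exact ⟨_, hw.adj_getLast_dropLast hl⟩

section WalkIn

variable {S : Set V}

theorem IsWalk.isWalkIn (hw : IsWalk A u v l) (hu : u ∈ S) (hv : v ∈ S)
    (hint : ∀ x ∈ l.dropLast, x ∈ S) : IsWalkIn A S u v l := by
  refine ⟨hw, ?_⟩
  rcases eq_or_ne l [] with rfl | hl
  · simpa using hu
  have hlast : l.getLast hl = v := by simpa [List.getLast_cons hl] using hw.2
  intro x hx
  rw [← List.dropLast_append_getLast hl, hlast] at hx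
  simp only [List.mem_cons, List.mem_append, List.not_mem_nil, or_false] at hx
  rcases hx with rfl | hx | rfl
  exacts [hu, hint x hx, hv]

theorem isWalkIn_nil (hu : u ∈ S) : IsWalkIn A S u u [] :=
  isWalk_nil_iff.2 rfl |>.isWalkIn hu hu (by simp)

theorem IsWalkIn.append {w : V} {m : List V} (hl : IsWalkIn A S u v l)
    (hm : IsWalkIn A S v w m) : IsWalkIn A S u w (l ++ m) := by
  refine ⟨hl.1.append hm.1, fun x hx => ?_⟩
  rw [← List.cons_append, List.mem_append] at hx
  rcases hx with hx | hx
  · exact hl.2 x hx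
  · exact hm.2 x (List.mem_cons_of_mem v hx)

theorem IsWalkIn.exists_reverse (hS : ∀ x ∈ S, ∀ y ∈ S, A x y → ∃ l, IsWalkIn A S y x l)
    (h : IsWalkIn A S u v l) : ∃ m, IsWalkIn A S v u m := by
  induction l generalizing u with
  | nil =>
    rw [← isWalk_nil_iff.1 h.1]
    exact ⟨[], isWalkIn_nil (h.2 u List.mem_cons_self)⟩
  | cons a t ih =>
    obtain ⟨hua, hat⟩ := isWalk_cons_iff.1 h.1
    have ha : a ∈ S := h.2 a (by simp)
    obtain ⟨m, hm⟩ := ih ⟨hat, fun x hx => h.2 x (List.mem_cons_of_mem u hx)⟩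
    obtain ⟨m', hm'⟩ := hS u (h.2 u List.mem_cons_self) a ha hua
    exact ⟨m ++ m', hm.append hm'⟩

end WalkIn

theorem IsPath.three_le_length_of_isPath_back (hg : 5 ≤ girth A) {m : List V}
    (hl : IsPath A u v l) (hl2 : l.length ≤ 2) (hm : IsPath A v u m) (huv : u ≠ v) :
    3 ≤ m.length := by
  match l, hl, hl2 with
  | [], hl, _ => exact absurd (isWalk_nil_iff.1 hl.1) huv
  | [x], hl, _ =>
    obtain ⟨hux, hxv⟩ := isWalk_cons_iff.1 hl.1
    rw [isWalk_nil_iff.1 hxv] at hux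
    have := hm.girth_le_length_add_one hux
    omega
  | [a, _], hl, _ =>
    obtain ⟨hua, hax⟩ := isWalk_cons_iff.1 hl.1
    obtain ⟨hav, hxv⟩ := isWalk_cons_iff.1 hax
    obtain rfl := (isWalk_nil_iff.1 hxv).symm
    match m, hm with
    | [], hm => exact absurd (isWalk_nil_iff.1 hm.1) huv.symm
    | [y], hm =>
      obtain ⟨hvy, hyu⟩ := isWalk_cons_iff.1 hm.1
      rw [isWalk_nil_iff.1 hyu] at hvy
      have := hl.girth_le_length_add_one hvy
      omega
    | [c, _], hm =>
      obtain ⟨hvc, hcy⟩ := isWalk_cons_iff.1 hm.1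
      obtain ⟨hcu, hyu⟩ := isWalk_cons_iff.1 hcy
      obtain rfl := (isWalk_nil_iff.1 hyu).symm
      have hdl := hl.2
      have hdm := hm.2
      simp only [List.nodup_cons, List.mem_cons, List.not_mem_nil, or_false] at hdl hdm
      by_cases hac : a = c
      · subst hac
        have hp : IsPath A a v [v] :=
          ⟨isWalk_cons_iff.2 ⟨hav, isWalk_nil_iff.2 rfl⟩, by simp [hdl.2.1]⟩
        have := hp.girth_le_length_add_one hvc
        simp only [List.length_cons, List.length_nil] at this
        omega
      · have hp : IsPath A u c [a, v, c] :=
          ⟨isWalk_cons_iff.2 ⟨hua, isWalk_cons_iff.2 ⟨hav, isWalk_cons_iff.2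
            ⟨hvc, isWalk_nil_iff.2 rfl⟩⟩⟩, by simp [hac]; tauto⟩
        have := hp.girth_le_length_add_one hcu
        simp only [List.length_cons, List.length_nil] at this
        omega
    | _ :: _ :: _ :: _, _ => simp
  | _ :: _ :: _ :: _, _, hl2 => simp at hl2

section Coloring

variable {Γ : V → ℕ}

def nonsingular (Γ : V → ℕ) : Set V := {w | 2 ≤ {x | Γ x = Γ w}.ncard}

theorem MonoInternal.mem_nonsingular [Finite V] (hm : MonoInternal Γ l)
    (hnd : l.dropLast.Nodup) (h2 : 2 ≤ l.dropLast.length) {x : V} (hx : x ∈ l.dropLast) :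
    x ∈ nonsingular Γ := by
  classical
  obtain ⟨c, hc⟩ := hm
  have hsub : (l.dropLast.toFinset : Set V) ⊆ {y | Γ y = Γ x} := fun y hy => by
    rw [Finset.mem_coe, List.mem_toFinset] at hy
    rw [Set.mem_ofPred_eq, hc y hy, hc x hx]
  calc 2 ≤ l.dropLast.length := h2
    _ = (l.dropLast.toFinset : Set V).ncard := by
      rw [Set.ncard_coe_finset, List.toFinset_card_of_nodup hnd]
    _ ≤ {y | Γ y = Γ x}.ncard := Set.ncard_le_ncard hsub

theorem IsPath.mem_nonsingular_of_mem_dropLast [Finite V] (hp : IsPath A u v l)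
    (hm : MonoInternal Γ l) (h3 : 3 ≤ l.length) : ∀ x ∈ l.dropLast, x ∈ nonsingular Γ :=
  fun _ hx => hm.mem_nonsingular ((List.nodup_cons.1 hp.2).2.sublist (List.dropLast_sublist l))
    (by rw [List.length_dropLast]; omega) hx

theorem IsSVMC.exists_return_path [Finite V] (hΓ : IsSVMC A Γ) (hg : 5 ≤ girth A)
    (h : A u v) :
    ∃ l, IsPath A v u l ∧ 4 ≤ l.length ∧ ∀ x ∈ l.dropLast, x ∈ nonsingular Γ := by
  obtain ⟨l, hp, hm⟩ := hΓ v u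
  have h4 : 4 ≤ l.length := by
    have := hp.girth_le_length_add_one h
    omega
  exact ⟨l, hp, h4, hp.mem_nonsingular_of_mem_dropLast hm (by omega)⟩

theorem IsSVMC.exists_nonsingular_succ_of_adj [Finite V] (hΓ : IsSVMC A Γ)
    (hg : 5 ≤ girth A) (h : A u v) : ∃ w ∈ nonsingular Γ, A v w := by
  obtain ⟨_ | ⟨w, l⟩, hp, h4, hS⟩ := hΓ.exists_return_path hg h
  · simp at h4
  have hl : l ≠ [] := by
    rintro rfl
    simp at h4
  refine ⟨w, hS w ?_, (isWalk_cons_iff.1 hp.1).1⟩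
  rw [List.dropLast_cons_of_ne_nil hl]
  exact List.mem_cons_self

theorem IsSVMC.exists_nonsingular_pred_of_adj [Finite V] (hΓ : IsSVMC A Γ)
    (hg : 5 ≤ girth A) (h : A u v) : ∃ w ∈ nonsingular Γ, A w u := by
  obtain ⟨l, hp, h4, hS⟩ := hΓ.exists_return_path hg h
  have hl : l.dropLast ≠ [] := by
    rw [← List.length_pos_iff, List.length_dropLast]
    omega
  refine ⟨_, hS _ (List.getLast_mem hl), ?_⟩
  have hl' : l ≠ [] := List.ne_nil_of_length_pos (by omega)
  simpa [List.getLast_cons hl] using hp.1.adj_getLast_dropLast hl'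

theorem IsSVMC.totalAbsorbing_nonsingular [Finite V] (hΓ : IsSVMC A Γ) (hs : Strong A)
    (hg : 5 ≤ girth A) : TotalAbsorbing A (nonsingular Γ) := fun v =>
  have := nontrivial_of_two_le_girth (by omega : 2 ≤ girth A)
  let ⟨_, hu⟩ := hs.exists_adj_to v
  hΓ.exists_nonsingular_succ_of_adj hg hu

theorem IsSVMC.totalDominating_nonsingular [Finite V] (hΓ : IsSVMC A Γ) (hs : Strong A)
    (hg : 5 ≤ girth A) : TotalDominating A (nonsingular Γ) := fun v =>
  have := nontrivial_of_two_le_girth (by omega : 2 ≤ girth A)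
  let ⟨_, hw⟩ := hs.exists_adj_from v
  hΓ.exists_nonsingular_pred_of_adj hg hw

theorem IsSVMC.strongOn_nonsingular [Finite V] (hΓ : IsSVMC A Γ) (hg : 5 ≤ girth A) :
    StrongOn A (nonsingular Γ) := by
  have hback : ∀ x ∈ nonsingular Γ, ∀ y ∈ nonsingular Γ, A x y →
      ∃ l, IsWalkIn A (nonsingular Γ) y x l := fun x hx y hy h =>
    let ⟨l, hp, _, hS⟩ := hΓ.exists_return_path hg h
    ⟨l, hp.1.isWalkIn hy hx hS⟩
  intro u hu v hv
  rcases eq_or_ne u v with rfl | huv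
  · exact ⟨[], isWalkIn_nil hu⟩
  obtain ⟨l, hp, hm⟩ := hΓ u v
  by_cases hl : 3 ≤ l.length
  · exact ⟨l, hp.1.isWalkIn hu hv (hp.mem_nonsingular_of_mem_dropLast hm hl)⟩
  obtain ⟨m, hq, hqm⟩ := hΓ v u
  have hm3 := hp.three_le_length_of_isPath_back hg (by omega) hq huv
  exact IsWalkIn.exists_reverse hback
    (hq.1.isWalkIn hv hu (hq.mem_nonsingular_of_mem_dropLast hqm hm3))

end Coloring

end SVMC

/-- in a strong digraph of girth at least 5 with an SVMC-coloring,
the subdigraph `D*` induced by the vertices in non-singular color classes is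
strongly connected, and `V(D*)` is absorbing and dominating. -/
theorem strong_absorbing_dominating_of_girth_ge_five {V : Type*} [Fintype V]
    (A : V → V → Prop) (Γ : V → ℕ)
    (hstrong : SVMC.Strong A) (hΓ : SVMC.IsSVMC A Γ) (hg : 5 ≤ SVMC.girth A) :
    SVMC.StrongOn A {w : V | 2 ≤ {x : V | Γ x = Γ w}.ncard} ∧
      SVMC.Absorbing A {w : V | 2 ≤ {x : V | Γ x = Γ w}.ncard} ∧
      SVMC.Dominating A {w : V | 2 ≤ {x : V | Γ x = Γ w}.ncard} :=
  ⟨hΓ.strongOn_nonsingular hg,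
    fun v _ => hΓ.totalAbsorbing_nonsingular hstrong hg v,
    fun v _ => hΓ.totalDominating_nonsingular hstrong hg v⟩
end

section
/- Let D be a strong digraph not isomorphic to the directed 3-cycle, let H = L(D) be its line digraph, let Γ be an SVMC-coloring of H, and let Γ' be the arc coloring of D assigning to each arc e the color Γ(e). If (u,v) is an ordered pair of vertices of D that is not a bad pair, then there exists a directed (v,u)-path in D all of whose arcs have the same color under Γ'. -/
/-! Because `(u, v)` is not a bad pair, some arc `e₀` into `v` differs from some arc `f₀` out of
`u`. The SVMC-coloring yields an `(e₀, f₀)`-path in `L(D)`, nontrivial since `e₀ ≠ f₀`, whose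
internal vertices share one color `c`. Those internal vertices are consecutive arcs of `D` and so
form a `(v, u)`-walk all of whose arcs have color `c`; shortening the walk to a path only
discards arcs. -/

theorem List.IsSuffix.zip_tail_subset {α : Type*} {s m : List α} (h : s <:+ m) :
    s.zip s.tail ⊆ m.zip m.tail := by
  rw [List.suffix_iff_eq_drop.mp h, List.tail_drop, ← List.drop_tail, List.zip_eq_zipWith,
    List.zip_eq_zipWith, ← List.drop_zipWith]
  exact List.drop_subset _ _

namespace SVMC

variable {V : Type*} {A : V → V → Prop}

theorem isWalk_iff {u v : V} {l : List V} :
    IsWalk A u v l ↔ (u :: l).IsChain A ∧ (u :: l).getLast (List.cons_ne_nil u l) = v :=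
  Iff.rfl

@[simp] theorem isWalk_nil {u v : V} : IsWalk A u v [] ↔ u = v := by
  simp [isWalk_iff]

@[simp] theorem isWalk_cons {u v x : V} {l : List V} :
    IsWalk A u v (x :: l) ↔ A u x ∧ IsWalk A x v l := by
  simp [isWalk_iff, List.isChain_cons_cons, and_assoc]

theorem IsWalk.dropLast {u v : V} {l : List V} (h : IsWalk A u v l) (hl : l ≠ []) :
    ∃ w, IsWalk A u w l.dropLast ∧ A w v := by
  induction l generalizing u with
  | nil => exact absurd rfl hl
  | cons x l ih =>
    rw [isWalk_cons] at h
    rcases l with _ | ⟨y, l⟩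
    · exact ⟨u, isWalk_nil.mpr rfl, isWalk_nil.mp h.2 ▸ h.1⟩
    · obtain ⟨w, hw, hwv⟩ := ih h.2 (List.cons_ne_nil y l)
      exact ⟨w, by simpa [List.dropLast_cons_cons] using ⟨h.1, hw⟩, hwv⟩

theorem IsWalk.exists_adj_of_ne {u v : V} {l : List V} (h : IsWalk A u v l) (huv : u ≠ v) :
    (∃ x, A u x) ∧ ∃ w, A w v := by
  rcases l with _ | ⟨x, l⟩
  · exact absurd (isWalk_nil.mp h) huv
  · obtain ⟨w, -, hw⟩ := h.dropLast (List.cons_ne_nil x l)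
    exact ⟨⟨x, (isWalk_cons.mp h).1⟩, w, hw⟩

theorem IsPath.of_suffix {u v w : V} {p q : List V} (h : IsPath A w v p)
    (hs : u :: q <:+ w :: p) : IsPath A u v q :=
  ⟨⟨h.1.1.suffix hs, (hs.getLast (List.cons_ne_nil u q)).trans h.1.2⟩, h.2.sublist hs.sublist⟩

theorem IsWalk.exists_isPath_zip_subset {u v : V} {l : List V} (h : IsWalk A u v l) :
    ∃ p, IsPath A u v p ∧ (u :: p).zip p ⊆ (u :: l).zip l := by
  induction l generalizing u with
  | nil => exact ⟨[], ⟨h, List.nodup_singleton u⟩, List.Subset.refl _⟩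
  | cons x l ih =>
    rw [isWalk_cons] at h
    obtain ⟨p, hp, hsub⟩ := ih h.2
    by_cases hu : u ∈ x :: p
    · obtain ⟨s, t, hst⟩ := List.append_of_mem hu
      have hsuf : u :: t <:+ x :: p := ⟨s, hst.symm⟩
      exact ⟨t, hp.of_suffix hsuf,
        List.Subset.trans hsuf.zip_tail_subset
          (List.Subset.trans hsub (List.subset_cons_self _ _))⟩
    · exact ⟨x :: p, ⟨isWalk_cons.mpr ⟨h.1, hp.1⟩, List.nodup_cons.mpr ⟨hu, hp.2⟩⟩,
        List.cons_subset_cons _ hsub⟩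

theorem IsWalk.heads_of_lineAdj {e f : Arc A} {E : List (Arc A)} (h : IsWalk (lineAdj A) e f E) :
    IsWalk A e.1.2 f.1.2 (E.map fun g => g.1.2) ∧
      (e.1.2 :: E.map fun g => g.1.2).zip (E.map fun g => g.1.2) = E.map Subtype.val := by
  induction E generalizing e with
  | nil => exact ⟨isWalk_nil.mpr (congrArg (·.1.2) (isWalk_nil.mp h)), rfl⟩
  | cons g E ih =>
    obtain ⟨hadj, hg⟩ := isWalk_cons.mp h
    obtain ⟨hwalk, hzip⟩ := ih hg
    have hedge : e.1.2 = g.1.1 := hadj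
    refine ⟨isWalk_cons.mpr ⟨hedge ▸ g.2, hwalk⟩, ?_⟩
    simp only [List.map_cons, List.zip_cons_cons, hzip, hedge]
    rfl

theorem exists_arc_ne_of_not_badPair {u v : V} (hu : ∃ x, A u x) (hv : ∃ w, A w v)
    (h : ¬ BadPair A u v) : ∃ e f : Arc A, e.1.2 = v ∧ f.1.1 = u ∧ e ≠ f := by
  obtain ⟨x, hx⟩ := hu
  obtain ⟨w, hw⟩ := hv
  simp only [BadPair, Set.eq_singleton_iff_nonempty_unique_mem, Set.mem_ofPred_eq, not_and_or,
    not_forall] at h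
  rcases h with (h | ⟨x', hx', hne⟩) | (h | ⟨w', hw', hne⟩)
  · exact absurd ⟨x, hx⟩ h
  · exact ⟨⟨(w, v), hw⟩, ⟨(u, x'), hx'⟩, rfl, rfl, fun h => hne (congrArg (·.1.2) h).symm⟩
  · exact absurd ⟨w, hw⟩ h
  · exact ⟨⟨(w', v), hw'⟩, ⟨(u, x), hx⟩, rfl, rfl, fun h => hne (congrArg (·.1.1) h)⟩

end SVMC

open SVMC

theorem exists_mono_path_of_not_badPair_general {V : Type*}
    (A : V → V → Prop) (u v : V)
    (hstrong : SVMC.Strong A)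
    (Γ : SVMC.Arc A → ℕ) (hΓ : SVMC.IsSVMC (SVMC.lineAdj A) Γ)
    (hnotbad : ¬ SVMC.BadPair A u v) :
    ∃ l : List V, SVMC.IsPath A v u l ∧
      ∃ c : ℕ, ∀ e : SVMC.Arc A, e.1 ∈ (v :: l).zip l → Γ e = c := by
  by_cases huv : u = v
  · exact ⟨[], ⟨isWalk_nil.mpr huv.symm, List.nodup_singleton v⟩, 0, by simp⟩
  obtain ⟨l, hl⟩ := hstrong u v
  obtain ⟨hout, hin⟩ := hl.exists_adj_of_ne huv
  obtain ⟨e₀, f₀, he₀, hf₀, hne⟩ := exists_arc_ne_of_not_badPair hout hin hnotbad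
  obtain ⟨L, ⟨hL, -⟩, c, hc⟩ := hΓ e₀ f₀
  have hL0 : L ≠ [] := by
    rintro rfl
    exact hne (isWalk_nil.mp hL)
  obtain ⟨g, hg, hgf₀⟩ := hL.dropLast hL0
  obtain ⟨hwalk, harcs⟩ := hg.heads_of_lineAdj
  have hgu : g.1.2 = u := hgf₀.trans hf₀
  rw [he₀, hgu] at hwalk
  rw [he₀] at harcs
  obtain ⟨p, hp, hsub⟩ := hwalk.exists_isPath_zip_subset
  refine ⟨p, hp, c, fun e he => hc e ?_⟩
  have hmem := hsub he
  rw [harcs] at hmem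
  exact (List.mem_map_of_injective Subtype.val_injective).mp hmem

/-- let `D` be a strong digraph not isomorphic to the directed
3-cycle, `Γ` an SVMC-coloring of the line digraph `L(D)`, and color each arc
`e` of `D` by `Γ e`.  If `(u,v)` is not a bad pair, then there is a directed
`(v,u)`-path in `D` all of whose arcs have the same color. -/
theorem exists_mono_path_of_not_badPair {V : Type*} [Fintype V]
    (A : V → V → Prop) (u v : V)
    (hstrong : SVMC.Strong A) (hC3 : ¬ SVMC.IsoC3 A)
    (Γ : SVMC.Arc A → ℕ) (hΓ : SVMC.IsSVMC (SVMC.lineAdj A) Γ)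
    (hnotbad : ¬ SVMC.BadPair A u v) :
    ∃ l : List V, SVMC.IsPath A v u l ∧
      ∃ c : ℕ, ∀ e : SVMC.Arc A, e.1 ∈ (v :: l).zip l → Γ e = c :=
  exists_mono_path_of_not_badPair_general A u v hstrong Γ hΓ hnotbad
end
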